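/- (Theorem 2, part 2.) Suppose there exist s ≥ 1, pairwise orthonormal vectors u^{(1)},…,u^{(s)} ∈ ℂ^m each satisfying G u^{(k)} = λ_min u^{(k)}, and nonnegative real numbers b_1,…,b_s such that Σ_{k=1}^s b_k |u^{(k)}_i|² = η_i for every i. Then the equal-probability measurement is optimal: the constant vector p_i = λ_min is primal feasible and Σ_i η_i p'_i ≤ λ_min for every primal feasible p'. -/

import Mathlib

open Matrix BigOperators ComplexOrder

noncomputable section

/-- The reciprocal states: columns of `Φ (ΦᴴΦ)⁻¹`. -/
def reciprocal {r m : ℕ} (Φ : Matrix (Fin r) (Fin m) ℂ) : Matrix (Fin r) (Fin m) ℂ :=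
  Φ * (Φᴴ * Φ)⁻¹

/-- The rank-one operator `Q_i = φ̃_i φ̃_iᴴ`. -/
def Qop {r m : ℕ} (Φ : Matrix (Fin r) (Fin m) ℂ) (i : Fin m) : Matrix (Fin r) (Fin r) ℂ :=
  vecMulVec (fun a => reciprocal Φ a i) (fun b => star (reciprocal Φ b i))

/-- `p` is primal feasible: `p_i ≥ 0` and `I - Σ p_i Q_i ⪰ 0`. -/
def PrimalFeasible {r m : ℕ} (Φ : Matrix (Fin r) (Fin m) ℂ) (p : Fin m → ℝ) : Prop :=
  (∀ i, 0 ≤ p i) ∧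
    ((1 : Matrix (Fin r) (Fin r) ℂ) - ∑ i : Fin m, (p i : ℂ) • Qop Φ i).PosSemidef

/-- `(X, z)` is dual feasible: `X ⪰ 0`, `z_i ≥ 0` and `Re Tr(Q_i X) = η_i + z_i`. -/
def DualFeasible {r m : ℕ} (Φ : Matrix (Fin r) (Fin m) ℂ) (η : Fin m → ℝ)
    (X : Matrix (Fin r) (Fin r) ℂ) (z : Fin m → ℝ) : Prop :=
  X.PosSemidef ∧ (∀ i, 0 ≤ z i) ∧ ∀ i, (Matrix.trace (Qop Φ i * X)).re = η i + z i

/-! With `G = ΦᴴΦ` and `P = Φ̃Φᴴ` the orthogonal projection onto the range of `Φ`,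
`I - λ Σᵢ Qᵢ = (I - P) + Φ̃ (G - λ I) Φ̃ᴴ`, a sum of two positive semidefinite matrices when
`λ = λ_min`, so the equal-probability measurement is feasible.

For optimality, a unit eigenvector `u` of `G` for `λ_min` gives `v = Φu` with `‖v‖² = λ_min` and,
since `Φ̃ᴴΦ = I`, `⟨v, Qᵢ v⟩ = |uᵢ|²`. Testing the feasibility of `p'` against `v` yields
`Σᵢ p'ᵢ |uᵢ|² ≤ λ_min`, and averaging these inequalities with the weights `b_k` (which sum to `1`
because `Σ η = 1`) gives `Σᵢ ηᵢ p'ᵢ ≤ λ_min`. -/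

section Gram

variable {𝕜 : Type*} [RCLike 𝕜] {ι κ : Type*} [Fintype ι] [Fintype κ]

lemma Matrix.PosSemidef.nonneg_of_mulVec_eq_smul {A : Matrix κ κ 𝕜} (hA : A.PosSemidef)
    {v : κ → 𝕜} (hv : v ≠ 0) {t : ℝ} (h : A *ᵥ v = (t : 𝕜) • v) : 0 ≤ t := by
  have hquad := hA.re_dotProduct_nonneg v
  rw [h, dotProduct_smul, smul_eq_mul, RCLike.re_ofReal_mul] at hquad
  have hnorm : 0 < RCLike.re (star v ⬝ᵥ v) :=
    RCLike.pos_iff.mp (dotProduct_star_self_pos_iff.mpr hv) |>.1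
  exact nonneg_of_mul_nonneg_left hquad hnorm

lemma Matrix.isUnit_conjTranspose_mul_self_of_linearIndependent [DecidableEq κ]
    {Φ : Matrix ι κ 𝕜} (h : LinearIndependent 𝕜 Φ.col) : IsUnit (Φᴴ * Φ) :=
  (PosDef.conjTranspose_mul_self Φ (mulVec_injective_iff.mpr h)).isUnit

lemma Matrix.star_mulVec_dotProduct_mulVec (Φ : Matrix ι κ 𝕜) (u : κ → 𝕜) :
    star (Φ *ᵥ u) ⬝ᵥ (Φ *ᵥ u) = star u ⬝ᵥ ((Φᴴ * Φ) *ᵥ u) := by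
  rw [← mulVec_mulVec, dotProduct_mulVec, star_mulVec, dotProduct_mulVec, dotProduct_mulVec]

lemma Matrix.star_dotProduct_vecMulVec_mulVec (x w : κ → 𝕜) :
    star w ⬝ᵥ (vecMulVec x (star x) *ᵥ w) = star (star x ⬝ᵥ w) * (star x ⬝ᵥ w) := by
  rw [vecMulVec_mulVec, op_smul_eq_smul, dotProduct_smul, smul_eq_mul, star_dotProduct,
    star_star, mul_comm]

lemma Matrix.IsHermitian.posSemidef_of_isIdempotentElem {P : Matrix κ κ 𝕜} (hP : P.IsHermitian)
    (hidem : IsIdempotentElem P) : P.PosSemidef := by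
  rw [← hidem.eq]
  nth_rewrite 1 [← hP.eq]
  exact posSemidef_conjTranspose_mul_self P

end Gram

lemma Matrix.star_dotProduct_self_eq_sum_norm_sq {κ : Type*} [Fintype κ] (u : κ → ℂ) :
    star u ⬝ᵥ u = ((∑ i, ‖u i‖ ^ 2 : ℝ) : ℂ) := by
  push_cast
  exact Finset.sum_congr rfl fun i _ => Complex.conj_mul' (u i)

lemma sum_mul_le_of_forall_sum_mul_le {ι κ : Type*} [Fintype ι] [Fintype κ] {η p : ι → ℝ}
    {w : κ → ι → ℝ} {b : κ → ℝ} {c : ℝ} (hb : ∀ k, 0 ≤ b k) (hw : ∀ k, ∑ i, w k i = 1)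
    (hη : ∀ i, ∑ k, b k * w k i = η i) (hη1 : ∑ i, η i = 1)
    (hle : ∀ k, ∑ i, p i * w k i ≤ c) : ∑ i, η i * p i ≤ c := by
  have hb1 : ∑ k, b k = 1 := by
    rw [← hη1, ← funext hη, Finset.sum_comm]
    simp_rw [← Finset.mul_sum, hw, mul_one]
  calc ∑ i, η i * p i = ∑ k, b k * ∑ i, p i * w k i := by
        simp_rw [← hη, Finset.sum_mul, Finset.mul_sum]
        rw [Finset.sum_comm]
        exact Finset.sum_congr rfl fun k _ => Finset.sum_congr rfl fun i _ => by ring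
    _ ≤ ∑ k, b k * c := Finset.sum_le_sum fun k _ => mul_le_mul_of_nonneg_left (hle k) (hb k)
    _ = c := by rw [← Finset.sum_mul, hb1, one_mul]

section Reciprocal

variable {r m : ℕ} {Φ : Matrix (Fin r) (Fin m) ℂ}

lemma conjTranspose_reciprocal : (reciprocal Φ)ᴴ = (Φᴴ * Φ)⁻¹ * Φᴴ := by
  rw [reciprocal, conjTranspose_mul, (isHermitian_conjTranspose_mul_self Φ).inv.eq]

lemma reciprocal_mul_gram (hΦ : IsUnit (Φᴴ * Φ)) : reciprocal Φ * (Φᴴ * Φ) = Φ := by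
  rw [reciprocal, Matrix.mul_assoc, nonsing_inv_mul _ ((isUnit_iff_isUnit_det _).mp hΦ),
    Matrix.mul_one]

lemma conjTranspose_reciprocal_mul (hΦ : IsUnit (Φᴴ * Φ)) : (reciprocal Φ)ᴴ * Φ = 1 := by
  rw [conjTranspose_reciprocal, Matrix.mul_assoc,
    nonsing_inv_mul _ ((isUnit_iff_isUnit_det _).mp hΦ)]

lemma conjTranspose_mul_reciprocal (hΦ : IsUnit (Φᴴ * Φ)) : Φᴴ * reciprocal Φ = 1 := by
  rw [reciprocal, ← Matrix.mul_assoc, mul_nonsing_inv _ ((isUnit_iff_isUnit_det _).mp hΦ)]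

lemma mul_conjTranspose_reciprocal : Φ * (reciprocal Φ)ᴴ = reciprocal Φ * Φᴴ := by
  rw [conjTranspose_reciprocal, reciprocal, Matrix.mul_assoc]

lemma isHermitian_reciprocal_mul_conjTranspose : (reciprocal Φ * Φᴴ).IsHermitian := by
  rw [IsHermitian, conjTranspose_mul, conjTranspose_conjTranspose, mul_conjTranspose_reciprocal]

lemma isIdempotentElem_reciprocal_mul_conjTranspose (hΦ : IsUnit (Φᴴ * Φ)) :
    IsIdempotentElem (reciprocal Φ * Φᴴ) := by
  rw [IsIdempotentElem, Matrix.mul_assoc, ← Matrix.mul_assoc Φᴴ, conjTranspose_mul_reciprocal hΦ,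
    Matrix.one_mul]

lemma sum_Qop : ∑ i, Qop Φ i = reciprocal Φ * (reciprocal Φ)ᴴ := by
  ext a c
  simp [Qop, vecMulVec_apply, Matrix.mul_apply, Matrix.sum_apply]

lemma one_sub_smul_sum_Qop (hΦ : IsUnit (Φᴴ * Φ)) (c : ℂ) :
    1 - c • ∑ i, Qop Φ i =
      (1 - reciprocal Φ * Φᴴ) + reciprocal Φ * (Φᴴ * Φ - c • 1) * (reciprocal Φ)ᴴ := by
  rw [sum_Qop, Matrix.mul_sub, Matrix.mul_smul, Matrix.mul_one, reciprocal_mul_gram hΦ,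
    Matrix.sub_mul, Matrix.smul_mul, mul_conjTranspose_reciprocal]
  abel

lemma primalFeasible_const (hΦ : IsUnit (Φᴴ * Φ)) {lam : ℝ} (hlam : 0 ≤ lam)
    (hmin : (Φᴴ * Φ - (lam : ℂ) • 1).PosSemidef) : PrimalFeasible Φ (fun _ => lam) := by
  refine ⟨fun _ => hlam, ?_⟩
  rw [← Finset.smul_sum, one_sub_smul_sum_Qop hΦ]
  have hproj : (1 - reciprocal Φ * Φᴴ).PosSemidef :=
    (isHermitian_one.sub isHermitian_reciprocal_mul_conjTranspose).posSemidef_of_isIdempotentElem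
      (isIdempotentElem_reciprocal_mul_conjTranspose hΦ).one_sub
  exact hproj.add (hmin.mul_mul_conjTranspose_same _)

lemma star_dotProduct_Qop_mulVec (w : Fin r → ℂ) (i : Fin m) :
    star w ⬝ᵥ (Qop Φ i *ᵥ w) =
      star (((reciprocal Φ)ᴴ *ᵥ w) i) * ((reciprocal Φ)ᴴ *ᵥ w) i :=
  star_dotProduct_vecMulVec_mulVec (fun a => reciprocal Φ a i) w

lemma star_dotProduct_Qop_mulVec_mulVec (hΦ : IsUnit (Φᴴ * Φ)) (u : Fin m → ℂ) (i : Fin m) :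
    star (Φ *ᵥ u) ⬝ᵥ (Qop Φ i *ᵥ (Φ *ᵥ u)) = (‖u i‖ ^ 2 : ℂ) := by
  rw [star_dotProduct_Qop_mulVec, mulVec_mulVec, conjTranspose_reciprocal_mul hΦ, one_mulVec]
  exact Complex.conj_mul' (u i)

lemma star_dotProduct_one_sub_sum_smul_Qop_mulVec (hΦ : IsUnit (Φᴴ * Φ)) (p : Fin m → ℝ)
    (u : Fin m → ℂ) :
    star (Φ *ᵥ u) ⬝ᵥ ((1 - ∑ i, (p i : ℂ) • Qop Φ i) *ᵥ (Φ *ᵥ u)) =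
      star u ⬝ᵥ ((Φᴴ * Φ) *ᵥ u) - ((∑ i, p i * ‖u i‖ ^ 2 : ℝ) : ℂ) := by
  rw [sub_mulVec, one_mulVec, dotProduct_sub, star_mulVec_dotProduct_mulVec, sum_mulVec,
    dotProduct_sum]
  push_cast
  simp_rw [smul_mulVec, dotProduct_smul, star_dotProduct_Qop_mulVec_mulVec hΦ, smul_eq_mul]

lemma sum_mul_norm_sq_le_of_primalFeasible (hΦ : IsUnit (Φᴴ * Φ)) {p : Fin m → ℝ}
    (hp : PrimalFeasible Φ p) {u : Fin m → ℂ} (hu : star u ⬝ᵥ u = 1) {lam : ℝ}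
    (heig : (Φᴴ * Φ) *ᵥ u = (lam : ℂ) • u) : ∑ i, p i * ‖u i‖ ^ 2 ≤ lam := by
  have hquad := hp.2.dotProduct_mulVec_nonneg (Φ *ᵥ u)
  rw [star_dotProduct_one_sub_sum_smul_Qop_mulVec hΦ, heig, dotProduct_smul, hu, smul_eq_mul,
    mul_one, ← Complex.ofReal_sub, Complex.zero_le_real] at hquad
  linarith

end Reciprocal

theorem stmt_10_general (m r : ℕ)
    (Φ : Matrix (Fin r) (Fin m) ℂ)
    (hind : LinearIndependent ℂ (fun i : Fin m => fun j : Fin r => Φ j i))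
    (η : Fin m → ℝ) (hη1 : ∑ i : Fin m, η i = 1)
    (lam : ℝ)
    -- `lam` is the smallest eigenvalue of the Gram matrix `ΦᴴΦ`:
    (hev : ∃ u : Fin m → ℂ, u ≠ 0 ∧ (Φᴴ * Φ).mulVec u = (lam : ℂ) • u)
    (hmin : ((Φᴴ * Φ) - (lam : ℂ) • 1).PosSemidef)
    (s : ℕ)
    (u : Fin s → Fin m → ℂ)
    -- the `u^{(k)}` are pairwise orthonormal eigenvectors of `ΦᴴΦ` for `lam`:
    (horth : ∀ k l : Fin s, ∑ i : Fin m, star (u k i) * u l i = if k = l then 1 else 0)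
    (heig : ∀ k : Fin s, (Φᴴ * Φ).mulVec (u k) = (lam : ℂ) • u k)
    (b : Fin s → ℝ) (hb : ∀ k, 0 ≤ b k)
    (hbu : ∀ i : Fin m, ∑ k : Fin s, b k * ‖u k i‖ ^ 2 = η i) :
    PrimalFeasible Φ (fun _ => lam) ∧
      ∀ p' : Fin m → ℝ, PrimalFeasible Φ p' → ∑ i : Fin m, η i * p' i ≤ lam := by
  have hG : IsUnit (Φᴴ * Φ) := isUnit_conjTranspose_mul_self_of_linearIndependent hind
  obtain ⟨v, hv, hGv⟩ := hev
  have hlam : 0 ≤ lam := (posSemidef_conjTranspose_mul_self Φ).nonneg_of_mulVec_eq_smul hv hGv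
  have hunit (k : Fin s) : star (u k) ⬝ᵥ u k = 1 := by simpa [dotProduct] using horth k k
  have hnorm (k : Fin s) : ∑ i, ‖u k i‖ ^ 2 = 1 := by
    exact_mod_cast (star_dotProduct_self_eq_sum_norm_sq (u k)).symm.trans (hunit k)
  refine ⟨primalFeasible_const hG hlam hmin, fun p hp => ?_⟩
  exact sum_mul_le_of_forall_sum_mul_le hb hnorm hbu hη1 fun k =>
    sum_mul_norm_sq_le_of_primalFeasible hG hp (hunit k) (heig k)

theorem stmt_10 (m r : ℕ) (hm : 0 < m) (hmr : m ≤ r)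
    (Φ : Matrix (Fin r) (Fin m) ℂ)
    (hind : LinearIndependent ℂ (fun i : Fin m => fun j : Fin r => Φ j i))
    (η : Fin m → ℝ) (hη : ∀ i, 0 ≤ η i) (hη1 : ∑ i : Fin m, η i = 1)
    (lam : ℝ)
    -- `lam` is the smallest eigenvalue of the Gram matrix `ΦᴴΦ`:
    (hev : ∃ u : Fin m → ℂ, u ≠ 0 ∧ (Φᴴ * Φ).mulVec u = (lam : ℂ) • u)
    (hmin : ((Φᴴ * Φ) - (lam : ℂ) • 1).PosSemidef)
    (s : ℕ) (hs : 1 ≤ s)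
    (u : Fin s → Fin m → ℂ)
    -- the `u^{(k)}` are pairwise orthonormal eigenvectors of `ΦᴴΦ` for `lam`:
    (horth : ∀ k l : Fin s, ∑ i : Fin m, star (u k i) * u l i = if k = l then 1 else 0)
    (heig : ∀ k : Fin s, (Φᴴ * Φ).mulVec (u k) = (lam : ℂ) • u k)
    (b : Fin s → ℝ) (hb : ∀ k, 0 ≤ b k)
    (hbu : ∀ i : Fin m, ∑ k : Fin s, b k * ‖u k i‖ ^ 2 = η i) :
    PrimalFeasible Φ (fun _ => lam) ∧
      ∀ p' : Fin m → ℝ, PrimalFeasible Φ p' → ∑ i : Fin m, η i * p' i ≤ lam :=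
  stmt_10_general m r Φ hind η hη1 lam hev hmin s u horth heig b hb hbu
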